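/- (Roto-translation behaviour of TING.) For every function f : ℝ × ℝ → ℝ, every α : ℝ, every d = (d₁, d₂) : ℝ × ℝ and all θ, ω : ℝ, the TING of the roto-translated image g : ℝ × ℝ → ℝ defined by g p = f (ρ (-α) (p - d)) satisfies M g θ ω = M f (θ - α) ω. Thus TING is invariant to translation and equivariant (by a θ-shift) to rotation. No integrability hypotheses on f are needed. -/

import Mathlib

open MeasureTheory Real

/-- Radon transform of an image `f : ℝ × ℝ → ℝ`. -/
noncomputable def Radon (f : ℝ × ℝ → ℝ) (θ τ : ℝ) : ℝ :=
  ∫ t : ℝ, f (τ * Real.cos θ - t * Real.sin θ, τ * Real.sin θ + t * Real.cos θ)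

/-- Rotation of the plane by angle `α`. -/
noncomputable def ρ (α : ℝ) (p : ℝ × ℝ) : ℝ × ℝ :=
  (p.1 * Real.cos α - p.2 * Real.sin α, p.1 * Real.sin α + p.2 * Real.cos α)

/-- TING of `f`: magnitude of the Fourier integral (along `τ`) of the sinogram row `θ`. -/
noncomputable def TING (f : ℝ × ℝ → ℝ) (θ ω : ℝ) : ℝ :=
  ‖FourierTransform.fourier (fun τ => (Radon f θ τ : ℂ)) ω‖

/-!
Parametrise the line `{x cos θ + y sin θ = τ}` as `t ↦ ρ θ (τ, t)`. Composing `f` with the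
rotation `ρ (-α)` turns `ρ θ` into `ρ (θ - α)`, so the sinogram is shifted in `θ`; translating
`f` by `d` moves the base point of the line, i.e. shifts `τ` by `(ρ (-θ) d).1` and `t` by
`(ρ (-θ) d).2`. The shift in `t` disappears under the Lebesgue integral, and the shift in `τ`
only multiplies the Fourier transform by a unimodular phase, which `‖·‖` removes.
-/

open FourierTransform

theorem Real.norm_fourier_comp_add_right {V E : Type*} [NormedAddCommGroup V]
    [InnerProductSpace ℝ V] [MeasurableSpace V] [BorelSpace V] [FiniteDimensional ℝ V]
    [NormedAddCommGroup E] [NormedSpace ℂ E] (f : V → E) (v₀ w : V) :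
    ‖𝓕 (fun v ↦ f (v + v₀)) w‖ = ‖𝓕 f w‖ := by
  change ‖VectorFourier.fourierIntegral 𝐞 volume (innerₗ V) (f ∘ fun v ↦ v + v₀) w‖ = _
  rw [VectorFourier.fourierIntegral_comp_add_right, Circle.norm_smul]
  rfl

theorem ρ_ρ (α β : ℝ) (p : ℝ × ℝ) : ρ α (ρ β p) = ρ (α + β) p := by
  simp only [ρ, Real.cos_add, Real.sin_add, Prod.mk.injEq]
  constructor <;> ring

theorem ρ_zero (p : ℝ × ℝ) : ρ 0 p = p := by
  simp [ρ]

theorem ρ_sub (α : ℝ) (p q : ℝ × ℝ) : ρ α (p - q) = ρ α p - ρ α q := by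
  simp only [ρ, Prod.fst_sub, Prod.snd_sub, Prod.mk_sub_mk, Prod.mk.injEq]
  constructor <;> ring

theorem Radon_eq_integral_ρ (f : ℝ × ℝ → ℝ) (θ τ : ℝ) :
    Radon f θ τ = ∫ t : ℝ, f (ρ θ (τ, t)) :=
  rfl

theorem Radon_comp_ρ (f : ℝ × ℝ → ℝ) (α θ τ : ℝ) :
    Radon (fun p ↦ f (ρ (-α) p)) θ τ = Radon f (θ - α) τ := by
  simp only [Radon_eq_integral_ρ, ρ_ρ, neg_add_eq_sub]

theorem Radon_comp_sub (f : ℝ × ℝ → ℝ) (d : ℝ × ℝ) (θ τ : ℝ) :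
    Radon (fun p ↦ f (p - d)) θ τ = Radon f θ (τ - (ρ (-θ) d).1) := by
  have hd : d = ρ θ (ρ (-θ) d) := by rw [ρ_ρ, add_neg_cancel, ρ_zero]
  have hline : ∀ t : ℝ, ρ θ (τ, t) - d = ρ θ (τ - (ρ (-θ) d).1, t - (ρ (-θ) d).2) := by
    intro t
    conv_lhs => rw [hd, ← ρ_sub]
    rfl
  simp only [Radon_eq_integral_ρ, hline]
  exact integral_sub_right_eq_self (fun t ↦ f (ρ θ (τ - (ρ (-θ) d).1, t))) _

theorem TING_comp_sub (f : ℝ × ℝ → ℝ) (d : ℝ × ℝ) (θ ω : ℝ) :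
    TING (fun p ↦ f (p - d)) θ ω = TING f θ ω := by
  simp only [TING, Radon_comp_sub]
  simp only [sub_eq_add_neg]
  exact Real.norm_fourier_comp_add_right (fun τ ↦ (Radon f θ τ : ℂ)) _ ω

theorem TING_comp_ρ (f : ℝ × ℝ → ℝ) (α θ ω : ℝ) :
    TING (fun p ↦ f (ρ (-α) p)) θ ω = TING f (θ - α) ω := by
  simp only [TING, Radon_comp_ρ]

/-- TING is translation invariant and rotation equivariant (by a `θ`-shift). -/
theorem TING_rototranslation (f : ℝ × ℝ → ℝ) (α : ℝ) (d : ℝ × ℝ) (θ ω : ℝ)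
    (g : ℝ × ℝ → ℝ) (hg : ∀ p, g p = f (ρ (-α) (p - d))) :
    TING g θ ω = TING f (θ - α) ω := by
  obtain rfl : g = fun p ↦ (fun q ↦ f (ρ (-α) q)) (p - d) := funext hg
  rw [TING_comp_sub (fun q ↦ f (ρ (-α) q)), TING_comp_ρ]
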